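/- The covariance E[g(z) conj(g(w))] = (1 + z w̄ + w z̄ − |z|² − |w|²) e^{z w̄} of g = ∂f/∂z − z̄ f is invariant under translations in the following sense: for every a ∈ ℂ and all z, w ∈ ℂ, |E[g(z+a) conj(g(w+a))]| · e^{-(|z+a|²+|w+a|²)/2} = |E[g(z) conj(g(w))]| · e^{-(|z|²+|w|²)/2}. -/

import Mathlib

/-- The covariance kernel `K(z,w) = (1 + z w̄ + w z̄ − |z|² − |w|²) e^{z w̄}` of the
covariant derivative of the Bargmann–Fock GAF: the modulus of the normalized kernel
`|K(z,w)| e^{-(|z|²+|w|²)/2}` is translation invariant. -/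
theorem stmt_9
    (K : ℂ → ℂ → ℂ)
    (hK : ∀ z w : ℂ, K z w =
      (1 + z * (starRingEnd ℂ) w + w * (starRingEnd ℂ) z
          - (‖z‖ : ℂ) ^ 2 - (‖w‖ : ℂ) ^ 2) *
        Complex.exp (z * (starRingEnd ℂ) w))
    (a z w : ℂ) :
    ‖K (z + a) (w + a)‖ *
        Real.exp (-(‖z + a‖ ^ 2 + ‖w + a‖ ^ 2) / 2) =
      ‖K z w‖ * Real.exp (-(‖z‖ ^ 2 + ‖w‖ ^ 2) / 2) := by
  have habs : ∀ u : ℂ, ((‖u‖ : ℂ)) ^ 2 = u * (starRingEnd ℂ) u := by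
    intro u
    rw [Complex.mul_conj]
    norm_cast
    exact Complex.sq_norm u
  -- the prefactor is translation invariant
  have hpre : (1 + (z + a) * (starRingEnd ℂ) (w + a) + (w + a) * (starRingEnd ℂ) (z + a)
      - (‖z + a‖ : ℂ) ^ 2 - (‖w + a‖ : ℂ) ^ 2)
      = (1 + z * (starRingEnd ℂ) w + w * (starRingEnd ℂ) z
      - (‖z‖ : ℂ) ^ 2 - (‖w‖ : ℂ) ^ 2) := by
    simp only [habs, map_add]
    ring
  -- the exponent identity
  have hexp : ((z + a) * (starRingEnd ℂ) (w + a)).re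
      + (-(‖z + a‖ ^ 2 + ‖w + a‖ ^ 2) / 2)
      = (z * (starRingEnd ℂ) w).re + (-(‖z‖ ^ 2 + ‖w‖ ^ 2) / 2) := by
    simp only [Complex.sq_norm, Complex.normSq_apply, Complex.mul_re, Complex.add_re,
      Complex.add_im, Complex.conj_re, Complex.conj_im]
    ring
  rw [hK, hK, norm_mul, norm_mul, hpre, Complex.norm_exp, Complex.norm_exp,
    mul_assoc, mul_assoc, ← Real.exp_add, ← Real.exp_add, hexp]
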